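/- (Corollary 1, uniqueness of sharp decompositions.) Fix positive integers m₁, m₂, s₁, s₂ and ε > 0. Let L and B be finitely supported functions ℤ×ℤ → ℝ, let (κ_i)_{i=1,…,s₁s₂} be an orthonormal basis of the space of functions supported in the s₁×s₂ grid, set σ_i = ‖(L⊗B)⊗κ_i‖_F, assume σ_i > 0 for all i, and let σ_max = max_i σ_i. Suppose B admits two decompositions B = I′⊗K′ = I″⊗K″, where K′, K″ lie in the simplex S and are supported in the m₁×m₂ grid, I′ ≠ 0, I″ ≠ 0, and both I′ and I″ are sharp in the sense that ‖(L⊗I′)⊗X‖_F ≥ (2√2·σ_max/ε)·‖X‖_F and ‖(L⊗I″)⊗X‖_F ≥ (2√2·σ_max/ε)·‖X‖_F for every X supported in the (m₁+s₁−1)×(m₂+s₂−1) grid. Then ‖K′ − K″‖_F ≤ ε. -/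

import Mathlib

/-- Images, kernels, and filters: finitely supported functions `ℤ × ℤ → ℝ`. -/
abbrev Img := (ℤ × ℤ) →₀ ℝ

/-- Discrete 2D convolution: `(X ⊗ Y)(i,j) = ∑_{(u,v)} X((i,j)-(u,v)) * Y(u,v)`. -/
noncomputable def conv (X Y : Img) : Img :=
  X.sum fun a xa => Y.sum fun b yb => Finsupp.single (a + b) (xa * yb)

/-- Frobenius norm `‖X‖_F = √(∑ X(i,j)²)`. -/
noncomputable def frob (X : Img) : ℝ := Real.sqrt (X.sum fun _ c => c ^ 2)

/-- Inner product `⟨X, Y⟩ = ∑ X(i,j) * Y(i,j)`. -/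
noncomputable def inner2 (X Y : Img) : ℝ := X.sum fun p c => c * Y p

/-- ℓ¹ norm `‖X‖₁ = ∑ |X(i,j)|`. -/
noncomputable def l1 (X : Img) : ℝ := X.sum fun _ c => |c|

/-- The simplex `S` of blur kernels: nonnegative entries summing to one. -/
def InSimplex (K : Img) : Prop := (∀ p, 0 ≤ K p) ∧ (K.sum fun _ c => c) = 1

/-- `X` is supported in the `a × b` grid `{0,…,a-1} × {0,…,b-1}`. -/
def SuppIn (a b : ℕ) (X : Img) : Prop :=
  ∀ p : ℤ × ℤ, ¬(0 ≤ p.1 ∧ p.1 < (a : ℤ) ∧ 0 ≤ p.2 ∧ p.2 < (b : ℤ)) → X p = 0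

/-! By associativity, `(L ⊗ I) ⊗ (K ⊗ κᵢ) = (L ⊗ B) ⊗ κᵢ` for either decomposition `B = I ⊗ K`,
so sharpness of `I` with constant `τ = 2√2 σ_max / ε` gives `τ ‖K ⊗ κᵢ‖ ≤ σᵢ ≤ σ_max`, i.e.
`‖K ⊗ κᵢ‖ ≤ ε / (2√2)`. The triangle inequality yields `‖(K' - K'') ⊗ κᵢ‖ ≤ ε / √2` for every `i`.
Since the `κᵢ` form an orthonormal basis of the grid space, Parseval gives
`∑ᵢ ‖D ⊗ κᵢ‖² = s₁ s₂ ‖D‖²` for every `D`, hence `‖K' - K''‖ ≤ ε / √2 ≤ ε`. -/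

open Finset

open scoped RealInnerProductSpace Pointwise

lemma ofCoeff_conv (X Y : Img) :
    AddMonoidAlgebra.ofCoeff (conv X Y) =
      AddMonoidAlgebra.ofCoeff X * AddMonoidAlgebra.ofCoeff Y := by
  rw [AddMonoidAlgebra.mul_def]
  simp only [conv, ← AddMonoidAlgebra.ofCoeff_single, ← AddMonoidAlgebra.ofCoeff_finsuppSum]

lemma conv_assoc (X Y Z : Img) : conv (conv X Y) Z = conv X (conv Y Z) :=
  AddMonoidAlgebra.ofCoeff_injective <| by simp only [ofCoeff_conv, mul_assoc]

lemma sub_conv (X Y Z : Img) : conv (X - Y) Z = conv X Z - conv Y Z :=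
  AddMonoidAlgebra.ofCoeff_injective <| by
    simp only [ofCoeff_conv, AddMonoidAlgebra.ofCoeff_sub, sub_mul]

lemma conv_apply (X Y : Img) (p : ℤ × ℤ) :
    conv X Y p = Y.sum fun b c => X (p - b) * c := by
  rw [← AddMonoidAlgebra.coeff_ofCoeff (conv X Y), ofCoeff_conv,
    AddMonoidAlgebra.coeff_mul_apply_right]
  rfl

lemma SuppIn.conv {a₁ a₂ b₁ b₂ : ℕ} {X Y : Img} (hX : SuppIn a₁ a₂ X) (hY : SuppIn b₁ b₂ Y) :
    SuppIn (a₁ + b₁ - 1) (a₂ + b₂ - 1) (conv X Y) := by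
  intro p hp
  rw [conv_apply]
  refine sum_eq_zero fun b hb => ?_
  dsimp only
  by_cases hXb : X (p - b) = 0
  · rw [hXb, zero_mul]
  have hb_grid : 0 ≤ b.1 ∧ b.1 < (b₁ : ℤ) ∧ 0 ≤ b.2 ∧ b.2 < (b₂ : ℤ) := by
    by_contra h; exact Finsupp.mem_support_iff.mp hb (hY b h)
  have hpb_grid : 0 ≤ p.1 - b.1 ∧ p.1 - b.1 < (a₁ : ℤ) ∧ 0 ≤ p.2 - b.2 ∧ p.2 - b.2 < (a₂ : ℤ) := by
    by_contra h; exact hXb (hX _ h)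
  exact absurd (by omega) hp

noncomputable def grid (a b : ℕ) : Finset (ℤ × ℤ) := Ico 0 (a : ℤ) ×ˢ Ico 0 (b : ℤ)

lemma card_grid (a b : ℕ) : #(grid a b) = a * b := by
  simp [grid]

lemma SuppIn.support_subset {a b : ℕ} {X : Img} (hX : SuppIn a b X) :
    X.support ⊆ grid a b := by
  intro p hp
  by_contra hnot
  refine Finsupp.mem_support_iff.mp hp (hX p fun h => hnot ?_)
  simp only [grid, mem_product, mem_Ico]
  omega

section Euclidean

variable (t : Finset (ℤ × ℤ))

noncomputable def euclideanRestrict (X : Img) : EuclideanSpace ℝ t := WithLp.toLp 2 fun p => X p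

variable {t}

lemma euclideanRestrict_sub (X Y : Img) :
    euclideanRestrict t (X - Y) = euclideanRestrict t X - euclideanRestrict t Y := rfl

lemma frob_eq_sqrt_sum {X : Img} (ht : X.support ⊆ t) : frob X = √(∑ p ∈ t, X p ^ 2) := by
  rw [frob, Finsupp.sum_of_support_subset X ht _ (by simp)]

lemma frob_sq_eq_sum {X : Img} (ht : X.support ⊆ t) : frob X ^ 2 = ∑ p ∈ t, X p ^ 2 := by
  rw [frob_eq_sqrt_sum ht, Real.sq_sqrt (sum_nonneg fun _ _ => sq_nonneg _)]

lemma norm_euclideanRestrict {X : Img} (ht : X.support ⊆ t) : ‖euclideanRestrict t X‖ = frob X := by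
  rw [EuclideanSpace.norm_eq, frob_eq_sqrt_sum ht, ← sum_coe_sort t]
  simp [euclideanRestrict]

lemma inner_euclideanRestrict {X : Img} (Y : Img) (ht : X.support ⊆ t) :
    ⟪euclideanRestrict t X, euclideanRestrict t Y⟫ = inner2 X Y := by
  rw [PiLp.inner_apply, inner2, Finsupp.sum_of_support_subset X ht _ (by simp),
    ← sum_coe_sort t]
  simp [euclideanRestrict, mul_comm]

end Euclidean

lemma frob_nonneg (X : Img) : 0 ≤ frob X := Real.sqrt_nonneg _

lemma frob_sub_le (X Y : Img) : frob (X - Y) ≤ frob X + frob Y := by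
  classical
  let t := X.support ∪ Y.support
  have hX : X.support ⊆ t := subset_union_left
  have hY : Y.support ⊆ t := subset_union_right
  have hXY : (X - Y).support ⊆ t := Finsupp.support_sub.trans (union_subset hX hY)
  rw [← norm_euclideanRestrict hX, ← norm_euclideanRestrict hY, ← norm_euclideanRestrict hXY,
    euclideanRestrict_sub]
  exact norm_sub_le _ _

lemma support_conv_subset (X Y : Img) : (conv X Y).support ⊆ X.support + Y.support := by
  rw [← AddMonoidAlgebra.coeff_ofCoeff (conv X Y), ofCoeff_conv]
  exact AddMonoidAlgebra.support_coeff_mul_subset _ _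

lemma sum_sq_sub_eq_frob_sq {X : Img} {P : Finset (ℤ × ℤ)} {g : ℤ × ℤ}
    (hP : ∀ q ∈ X.support, q + g ∈ P) : ∑ p ∈ P, X (p - g) ^ 2 = frob X ^ 2 := by
  rw [frob_sq_eq_sum subset_rfl]
  have hmap : X.support.map (addRightEmbedding g) ⊆ P := by
    intro p hp
    obtain ⟨q, hq, rfl⟩ := mem_map.mp hp
    exact hP q hq
  rw [← sum_subset hmap fun p _ hp => ?_, sum_map]
  · simp
  · have : X (p - g) = 0 :=
      Finsupp.notMem_support_iff.mp fun h => hp (mem_map.mpr ⟨p - g, h, by simp⟩)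
    simp [this]

lemma exists_orthonormalBasis_of_card_eq_finrank {𝕜 E ι : Type*} [RCLike 𝕜]
    [NormedAddCommGroup E] [InnerProductSpace 𝕜 E] [FiniteDimensional 𝕜 E] [Fintype ι]
    {v : ι → E} (hv : Orthonormal 𝕜 v) (hcard : Fintype.card ι = Module.finrank 𝕜 E) :
    ∃ b : OrthonormalBasis ι 𝕜 E, ⇑b = v :=
  ⟨.mk hv (hv.linearIndependent.span_eq_top_of_card_eq_finrank' hcard).ge,
    OrthonormalBasis.coe_mk _ _⟩

section Parseval

variable {ι : Type*} {t : Finset (ℤ × ℤ)} {κ : ι → Img}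

lemma orthonormal_euclideanRestrict [DecidableEq ι] (hκ : ∀ i, (κ i).support ⊆ t)
    (hortho : ∀ i j, inner2 (κ i) (κ j) = if i = j then 1 else 0) :
    Orthonormal ℝ fun i => euclideanRestrict t (κ i) := by
  rw [orthonormal_iff_ite]
  intro i j
  rw [inner_euclideanRestrict _ (hκ i), hortho]

/- `(D ⊗ κᵢ)(p)` is the coefficient of `κᵢ` on `g ↦ D (p - g)` in the grid space, so Parseval
applies pointwise. -/
lemma sum_sq_conv_apply [Fintype ι] (hκ : ∀ i, (κ i).support ⊆ t)
    (hON : Orthonormal ℝ fun i => euclideanRestrict t (κ i)) (hcard : Fintype.card ι = #t)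
    (D : Img) (p : ℤ × ℤ) :
    ∑ i, conv D (κ i) p ^ 2 = ∑ g ∈ t, D (p - g) ^ 2 := by
  obtain ⟨b, hb⟩ := exists_orthonormalBasis_of_card_eq_finrank hON (by simpa using hcard)
  let v : EuclideanSpace ℝ t := WithLp.toLp 2 fun g => D (p - g)
  have hconv : ∀ i, conv D (κ i) p = ⟪b i, v⟫ := by
    intro i
    rw [conv_apply, Finsupp.sum_of_support_subset _ (hκ i) _ (by simp), hb,
      PiLp.inner_apply, ← sum_coe_sort t]
    simp [euclideanRestrict, v]
  simp_rw [hconv, b.sum_sq_inner_right, EuclideanSpace.norm_sq_eq, ← sum_coe_sort t]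
  simp [v]

lemma sum_frob_conv_sq [Fintype ι] (hκ : ∀ i, (κ i).support ⊆ t)
    (hON : Orthonormal ℝ fun i => euclideanRestrict t (κ i)) (hcard : Fintype.card ι = #t)
    (D : Img) :
    ∑ i, frob (conv D (κ i)) ^ 2 = #t * frob D ^ 2 := by
  let P := D.support + t
  have hP : ∀ i, (conv D (κ i)).support ⊆ P := fun i =>
    (support_conv_subset D (κ i)).trans (add_subset_add_left (hκ i))
  calc ∑ i, frob (conv D (κ i)) ^ 2
      = ∑ p ∈ P, ∑ i, conv D (κ i) p ^ 2 := by
        simp_rw [frob_sq_eq_sum (hP _)]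
        exact sum_comm
    _ = ∑ g ∈ t, ∑ p ∈ P, D (p - g) ^ 2 := by
        simp_rw [sum_sq_conv_apply hκ hON hcard]
        exact sum_comm
    _ = #t * frob D ^ 2 := by
        rw [← nsmul_eq_mul, ← sum_const]
        exact sum_congr rfl fun g hg =>
          sum_sq_sub_eq_frob_sq fun q hq => add_mem_add hq hg

lemma frob_le_of_forall_frob_conv_le [Fintype ι] (hκ : ∀ i, (κ i).support ⊆ t)
    (hON : Orthonormal ℝ fun i => euclideanRestrict t (κ i)) (hcard : Fintype.card ι = #t)
    [Nonempty ι] {D : Img} {c : ℝ} (hc : ∀ i, frob (conv D (κ i)) ≤ c) :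
    frob D ≤ c := by
  have hc0 : 0 ≤ c := (frob_nonneg _).trans (hc (Classical.arbitrary ι))
  have hN : (0 : ℝ) < #t := by rw [← hcard]; exact_mod_cast Fintype.card_pos
  have hsum : (#t : ℝ) * frob D ^ 2 ≤ #t * c ^ 2 := by
    rw [← sum_frob_conv_sq hκ hON hcard, ← hcard, ← card_univ, ← nsmul_eq_mul,
      ← sum_const]
    exact sum_le_sum fun i _ => pow_le_pow_left₀ (frob_nonneg _) (hc i) 2
  exact (pow_le_pow_iff_left₀ (frob_nonneg D) hc0 two_ne_zero).mp (le_of_mul_le_mul_left hsum hN)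

end Parseval

lemma frob_conv_le_of_sharp {L I K Y : Img} {τ c : ℝ} (hτ : 0 < τ)
    (hsharp : τ * frob (conv K Y) ≤ frob (conv (conv L I) (conv K Y)))
    (hc : frob (conv (conv L (conv I K)) Y) ≤ c) : frob (conv K Y) ≤ c / τ := by
  rw [le_div_iff₀' hτ]
  calc τ * frob (conv K Y) ≤ frob (conv (conv L I) (conv K Y)) := hsharp
    _ = frob (conv (conv L (conv I K)) Y) := by simp only [conv_assoc]
    _ ≤ c := hc

theorem sharp_decomposition_unique_general (m₁ m₂ s₁ s₂ : ℕ)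
    (ε : ℝ) (hε : 0 < ε)
    (L B : Img)
    (κ : Fin (s₁ * s₂) → Img) (hκsupp : ∀ i, SuppIn s₁ s₂ (κ i))
    (hortho : ∀ i j, inner2 (κ i) (κ j) = if i = j then 1 else 0)
    (σ : Fin (s₁ * s₂) → ℝ) (hσ : ∀ i, σ i = frob (conv (conv L B) (κ i)))
    (hσpos : ∀ i, 0 < σ i)
    (σmax : ℝ) (hσmax : IsGreatest (Set.range σ) σmax)
    (I' K' I'' K'' : Img)
    (hK'supp : SuppIn m₁ m₂ K')
    (hK''supp : SuppIn m₁ m₂ K'')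
    (hB' : B = conv I' K') (hB'' : B = conv I'' K'')
    (hsharp' : ∀ X : Img, SuppIn (m₁ + s₁ - 1) (m₂ + s₂ - 1) X →
      (2 * Real.sqrt 2 * σmax / ε) * frob X ≤ frob (conv (conv L I') X))
    (hsharp'' : ∀ X : Img, SuppIn (m₁ + s₁ - 1) (m₂ + s₂ - 1) X →
      (2 * Real.sqrt 2 * σmax / ε) * frob X ≤ frob (conv (conv L I'') X)) :
    frob (K' - K'') ≤ ε := by
  obtain ⟨j, hj⟩ := hσmax.1
  have : Nonempty (Fin (s₁ * s₂)) := ⟨j⟩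
  have hσmax_pos : 0 < σmax := hj ▸ hσpos j
  set τ := 2 * √2 * σmax / ε
  have hτ : 0 < τ := by positivity
  have hkernel : ∀ {I K}, B = conv I K → SuppIn m₁ m₂ K →
      (∀ X, SuppIn (m₁ + s₁ - 1) (m₂ + s₂ - 1) X → τ * frob X ≤ frob (conv (conv L I) X)) →
      ∀ i, frob (conv K (κ i)) ≤ σmax / τ := fun hB hK hsharp i =>
    frob_conv_le_of_sharp hτ (hsharp _ (hK.conv (hκsupp i))) (hB ▸ hσ i ▸ hσmax.2 ⟨i, rfl⟩)
  have hκ i : (κ i).support ⊆ grid s₁ s₂ := (hκsupp i).support_subset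
  calc frob (K' - K'') ≤ σmax / τ + σmax / τ := by
        refine frob_le_of_forall_frob_conv_le hκ (orthonormal_euclideanRestrict hκ hortho)
          (by simp [card_grid]) fun i => ?_
        rw [sub_conv]
        exact (frob_sub_le _ _).trans
          (add_le_add (hkernel hB' hK'supp hsharp' i) (hkernel hB'' hK''supp hsharp'' i))
    _ = ε / √2 := by
        simp only [τ]
        field_simp
        ring
    _ ≤ ε := div_le_self hε.le (Real.one_le_sqrt.mpr one_le_two)

/-- Corollary 1 (uniqueness of sharp decompositions): any two τ-sharp decompositions of the
same blurry image have kernels within `ε` of each other. -/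
theorem sharp_decomposition_unique (m₁ m₂ s₁ s₂ : ℕ)
    (hm₁ : 0 < m₁) (hm₂ : 0 < m₂) (hs₁ : 0 < s₁) (hs₂ : 0 < s₂)
    (ε : ℝ) (hε : 0 < ε)
    (L B : Img)
    (κ : Fin (s₁ * s₂) → Img) (hκsupp : ∀ i, SuppIn s₁ s₂ (κ i))
    (hortho : ∀ i j, inner2 (κ i) (κ j) = if i = j then 1 else 0)
    (σ : Fin (s₁ * s₂) → ℝ) (hσ : ∀ i, σ i = frob (conv (conv L B) (κ i)))
    (hσpos : ∀ i, 0 < σ i)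
    (σmax : ℝ) (hσmax : IsGreatest (Set.range σ) σmax)
    (I' K' I'' K'' : Img) (hI' : I' ≠ 0) (hI'' : I'' ≠ 0)
    (hK' : InSimplex K') (hK'supp : SuppIn m₁ m₂ K')
    (hK'' : InSimplex K'') (hK''supp : SuppIn m₁ m₂ K'')
    (hB' : B = conv I' K') (hB'' : B = conv I'' K'')
    (hsharp' : ∀ X : Img, SuppIn (m₁ + s₁ - 1) (m₂ + s₂ - 1) X →
      (2 * Real.sqrt 2 * σmax / ε) * frob X ≤ frob (conv (conv L I') X))
    (hsharp'' : ∀ X : Img, SuppIn (m₁ + s₁ - 1) (m₂ + s₂ - 1) X →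
      (2 * Real.sqrt 2 * σmax / ε) * frob X ≤ frob (conv (conv L I'') X)) :
    frob (K' - K'') ≤ ε :=
  sharp_decomposition_unique_general m₁ m₂ s₁ s₂ ε hε L B κ hκsupp hortho σ hσ hσpos σmax hσmax I'
    K' I'' K'' hK'supp hK''supp hB' hB'' hsharp' hsharp''
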